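/- arXiv:1410.2661 — 3 statements merged into one kernel-verified Lean document; each statement's English description precedes it below -/
import Mathlib

section
/- For every nonzero integer m, every integer k, and every real x with 0 < x < 1/4: if m and k have the same parity then the Fourier coefficient f_k^m(x) is real (its imaginary part is 0), and if m and k have opposite parity then f_k^m(x) is purely imaginary (its real part is 0). -/
/-- `g(x,t)` from the paper (principal branch of the complex logarithm). -/
noncomputable def gFun (x t : ℝ) : ℂ :=
  Complex.I * Complex.log (1 - (x : ℂ) ^ 2 / 2 - Complex.I * (x : ℂ) +
      ((x : ℂ) ^ 2 / 2) * Complex.exp (Complex.I * (t : ℂ))) -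
  Complex.I * Complex.log (1 - (x : ℂ) ^ 2 / 2 + Complex.I * (x : ℂ) +
      ((x : ℂ) ^ 2 / 2) * Complex.exp (-(Complex.I * (t : ℂ)))) +
  Complex.I * Complex.log (1 - (x : ℂ) ^ 2 / 2 - Complex.I * (x : ℂ) -
      ((x : ℂ) ^ 2 / 2) * Complex.exp (-(Complex.I * (t : ℂ)))) -
  Complex.I * Complex.log (1 - (x : ℂ) ^ 2 / 2 + Complex.I * (x : ℂ) -
      ((x : ℂ) ^ 2 / 2) * Complex.exp (Complex.I * (t : ℂ)))

/-- `l(m,x,t)` from the paper. -/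
noncomputable def lFun (m : ℤ) (x t : ℝ) : ℂ :=
  Complex.I *
    (((1 - (x : ℂ) ^ 2 / 2 - Complex.I * (x : ℂ) -
          ((x : ℂ) ^ 2 / 2) * Complex.exp (-(Complex.I * (t : ℂ)))) /
        (1 - (x : ℂ) ^ 2 / 2 + Complex.I * (x : ℂ) -
          ((x : ℂ) ^ 2 / 2) * Complex.exp (Complex.I * (t : ℂ)))) ^ m -
      ((1 - (x : ℂ) ^ 2 / 2 + Complex.I * (x : ℂ) +
          ((x : ℂ) ^ 2 / 2) * Complex.exp (-(Complex.I * (t : ℂ)))) /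
        (1 - (x : ℂ) ^ 2 / 2 - Complex.I * (x : ℂ) +
          ((x : ℂ) ^ 2 / 2) * Complex.exp (Complex.I * (t : ℂ)))) ^ m)

/-- `ε_m(x,t) = e^{imt} (l(m,x,t)/(m g(x,t)) − 1)`. -/
noncomputable def epsFun (m : ℤ) (x t : ℝ) : ℂ :=
  Complex.exp (Complex.I * (m : ℂ) * (t : ℂ)) *
    (lFun m x t / ((m : ℂ) * gFun x t) - 1)

/-- The Fourier coefficients `f_k^m(x) = (1/2π) ∫_{-π}^{π} ε_m(x,t) e^{-ikt} dt`. -/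
noncomputable def fCoef (m k : ℤ) (x : ℝ) : ℂ :=
  (1 / (2 * Real.pi)) •
    ∫ t in (-Real.pi)..Real.pi,
      epsFun m x t * Complex.exp (-(Complex.I * (k : ℂ) * (t : ℂ)))

lemma g_conj (x t : ℝ) (hx0 : 0 < x) (hx : x < 1 / 4) :
    (starRingEnd ℂ) (gFun x (Real.pi - t)) = gFun x t := by
  have hc : (x:ℂ)^2/2 = ((x^2/2 : ℝ) : ℂ) := by push_cast; ring
  have he1 : Complex.exp (-(Complex.I * (t:ℂ))) = (Complex.exp (Complex.I * (t:ℂ)))⁻¹ :=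
    Complex.exp_neg _
  set e := Complex.exp (Complex.I * (t:ℂ)) with he
  have habs : ‖e‖ = 1 := by rw [he]; simp [Complex.norm_exp]
  have habsinv : ‖e⁻¹‖ = 1 := by rw [norm_inv, habs]; norm_num
  have hce : (starRingEnd ℂ) e = e⁻¹ := by
    rw [he, ← Complex.exp_conj, ← Complex.exp_neg]
    congr 1
    simp [map_mul, Complex.conj_I, Complex.conj_ofReal]
  have h2 : Complex.exp (Complex.I * ((Real.pi - t : ℝ):ℂ)) = -e⁻¹ := by
    rw [show Complex.I * ((Real.pi - t : ℝ):ℂ) =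
        (Real.pi : ℂ) * Complex.I + -(Complex.I * (t:ℂ)) by push_cast; ring,
      Complex.exp_add, Complex.exp_pi_mul_I, he1]
    ring
  have h3 : Complex.exp (-(Complex.I * ((Real.pi - t : ℝ):ℂ))) = -e := by
    rw [show -(Complex.I * ((Real.pi - t : ℝ):ℂ)) =
        -((Real.pi:ℂ) * Complex.I) + Complex.I * (t:ℂ) by push_cast; ring,
      Complex.exp_add, Complex.exp_neg, Complex.exp_pi_mul_I, ← he]
    norm_num
  simp only [gFun]
  rw [hc, h2, h3, he1, ← he]
  simp only [map_sub, map_add, map_mul, Complex.conj_I]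
  rw [← Complex.log_conj, ← Complex.log_conj, ← Complex.log_conj, ← Complex.log_conj]
  · simp only [map_sub, map_add, map_mul, map_neg, map_inv₀, map_one, Complex.conj_ofReal,
      Complex.conj_I, hce, inv_inv]
    ring_nf
  all_goals {
    intro hpi
    have hre := (Complex.arg_eq_pi_iff.1 hpi).1
    have hb1 := abs_le.1 ((Complex.abs_re_le_norm e).trans habs.le)
    have hb2 := abs_le.1 ((Complex.abs_re_le_norm e⁻¹).trans habsinv.le)
    simp only [Complex.add_re, Complex.sub_re, Complex.one_re, Complex.mul_re,
      Complex.neg_re, Complex.neg_im, Complex.I_re, Complex.I_im, Complex.ofReal_re,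
      Complex.ofReal_im, Complex.mul_im, zero_mul, one_mul, mul_zero, sub_zero, zero_sub,
      neg_neg, neg_zero, add_zero, zero_add] at hre
    nlinarith [hb1.1, hb1.2, hb2.1, hb2.2, sq_nonneg x]
  }

lemma l_conj (m : ℤ) (x t : ℝ) :
    (starRingEnd ℂ) (lFun m x (Real.pi - t)) = lFun m x t := by
  have he1 : Complex.exp (-(Complex.I * (t:ℂ))) = (Complex.exp (Complex.I * (t:ℂ)))⁻¹ :=
    Complex.exp_neg _
  set e := Complex.exp (Complex.I * (t:ℂ)) with he
  have hce : (starRingEnd ℂ) e = e⁻¹ := by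
    rw [he, ← Complex.exp_conj, ← Complex.exp_neg]
    congr 1
    simp [map_mul, Complex.conj_I, Complex.conj_ofReal]
  have h2 : Complex.exp (Complex.I * ((Real.pi - t : ℝ):ℂ)) = -e⁻¹ := by
    rw [show Complex.I * ((Real.pi - t : ℝ):ℂ) =
        (Real.pi : ℂ) * Complex.I + -(Complex.I * (t:ℂ)) by push_cast; ring,
      Complex.exp_add, Complex.exp_pi_mul_I, he1]
    ring
  have h3 : Complex.exp (-(Complex.I * ((Real.pi - t : ℝ):ℂ))) = -e := by
    rw [show -(Complex.I * ((Real.pi - t : ℝ):ℂ)) =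
        -((Real.pi:ℂ) * Complex.I) + Complex.I * (t:ℂ) by push_cast; ring,
      Complex.exp_add, Complex.exp_neg, Complex.exp_pi_mul_I, ← he]
    norm_num
  simp only [lFun]
  rw [h2, h3, he1, ← he]
  simp only [map_sub, map_add, map_mul, map_neg, map_inv₀, map_one, map_div₀, map_zpow₀,
    map_ofNat, map_pow, Complex.conj_ofReal, Complex.conj_I, hce, inv_inv]
  ring_nf

lemma eps_conj (m : ℤ) (x t : ℝ) (hx0 : 0 < x) (hx : x < 1 / 4) :
    (starRingEnd ℂ) (epsFun m x (Real.pi - t)) = (-1:ℂ)^m * epsFun m x t := by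
  have hexp : (starRingEnd ℂ) (Complex.exp (Complex.I * (m:ℂ) * ((Real.pi - t:ℝ):ℂ)))
      = (-1:ℂ)^m * Complex.exp (Complex.I * (m:ℂ) * (t:ℂ)) := by
    rw [← Complex.exp_conj,
      show (starRingEnd ℂ) (Complex.I * (m:ℂ) * ((Real.pi - t:ℝ):ℂ)) =
        (m:ℂ) * -((Real.pi:ℂ) * Complex.I) + Complex.I * (m:ℂ) * (t:ℂ) by
          simp only [map_mul, Complex.conj_I, Complex.conj_ofReal, map_intCast]; push_cast; ring,
      Complex.exp_add, Complex.exp_int_mul, Complex.exp_neg, Complex.exp_pi_mul_I,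
      show ((-1:ℂ))⁻¹ = -1 by norm_num]
  simp only [epsFun]
  rw [map_mul, map_sub, map_div₀, map_mul, map_one, map_intCast, l_conj,
    g_conj x t hx0 hx, hexp]
  ring

lemma eps_periodic (m k : ℤ) (x : ℝ) :
    Function.Periodic
      (fun t : ℝ => epsFun m x t * Complex.exp (-(Complex.I * (k : ℂ) * (t : ℂ))))
      (2 * Real.pi) := by
  intro t
  have hp1 : Complex.exp (Complex.I * ((t + 2*Real.pi : ℝ):ℂ)) =
      Complex.exp (Complex.I * (t:ℂ)) := by
    rw [show Complex.I * ((t + 2*Real.pi : ℝ):ℂ) =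
        Complex.I * (t:ℂ) + 2*(Real.pi:ℂ)*Complex.I by push_cast; ring,
      Complex.exp_add, Complex.exp_two_pi_mul_I, mul_one]
  have hp2 : Complex.exp (-(Complex.I * ((t + 2*Real.pi : ℝ):ℂ))) =
      Complex.exp (-(Complex.I * (t:ℂ))) := by
    rw [show -(Complex.I * ((t + 2*Real.pi : ℝ):ℂ)) =
        -(Complex.I * (t:ℂ)) + (-1:ℤ)*(2*(Real.pi:ℂ)*Complex.I) by push_cast; ring,
      Complex.exp_add, Complex.exp_int_mul, Complex.exp_two_pi_mul_I, one_zpow, mul_one]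
  have hp3 : Complex.exp (Complex.I * (m:ℂ) * ((t + 2*Real.pi : ℝ):ℂ)) =
      Complex.exp (Complex.I * (m:ℂ) * (t:ℂ)) := by
    rw [show Complex.I * (m:ℂ) * ((t + 2*Real.pi : ℝ):ℂ) =
        Complex.I * (m:ℂ) * (t:ℂ) + (m:ℂ)*(2*(Real.pi:ℂ)*Complex.I) by push_cast; ring,
      Complex.exp_add, Complex.exp_int_mul, Complex.exp_two_pi_mul_I, one_zpow, mul_one]
  have hp4 : Complex.exp (-(Complex.I * (k:ℂ) * ((t + 2*Real.pi : ℝ):ℂ))) =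
      Complex.exp (-(Complex.I * (k:ℂ) * (t:ℂ))) := by
    rw [show -(Complex.I * (k:ℂ) * ((t + 2*Real.pi : ℝ):ℂ)) =
        -(Complex.I * (k:ℂ) * (t:ℂ)) + ((-k : ℤ):ℂ)*(2*(Real.pi:ℂ)*Complex.I) by
          push_cast; ring,
      Complex.exp_add, Complex.exp_int_mul, Complex.exp_two_pi_mul_I, one_zpow, mul_one]
  simp only [epsFun, lFun, gFun, hp1, hp2, hp3, hp4]

/-- Lemma 24: for `m ≠ 0`, `0 < x < 1/4`, the coefficient `f_k^m(x)` is real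
when `m` and `k` have the same parity and purely imaginary otherwise. -/
theorem stmt_14 (m k : ℤ) (hm : m ≠ 0) (x : ℝ) (hx0 : 0 < x) (hx : x < 1 / 4) :
    (Even (m - k) → (fCoef m k x).im = 0) ∧
    (¬ Even (m - k) → (fCoef m k x).re = 0) := by
  have hne : (-1 : ℂ) ≠ 0 := by norm_num
  -- pointwise conjugation identity for the integrand
  have hF : ∀ t : ℝ,
      (starRingEnd ℂ) (epsFun m x t * Complex.exp (-(Complex.I * (k:ℂ) * (t:ℂ)))) =
      (-1:ℂ)^(m+k) * (epsFun m x (Real.pi - t) *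
        Complex.exp (-(Complex.I * (k:ℂ) * ((Real.pi - t : ℝ):ℂ)))) := by
    intro t
    have h1 : (starRingEnd ℂ) (epsFun m x t) = (-1:ℂ)^m * epsFun m x (Real.pi - t) := by
      have := eps_conj m x (Real.pi - t) hx0 hx
      rwa [sub_sub_cancel] at this
    have h2 : (starRingEnd ℂ) (Complex.exp (-(Complex.I * (k:ℂ) * (t:ℂ)))) =
        Complex.exp (Complex.I * (k:ℂ) * (t:ℂ)) := by
      rw [← Complex.exp_conj]
      congr 1
      simp only [map_neg, map_mul, Complex.conj_I, Complex.conj_ofReal, map_intCast]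
      ring
    have hk : Complex.exp (-(Complex.I * (k:ℂ) * ((Real.pi - t:ℝ):ℂ))) =
        (-1:ℂ)^k * Complex.exp (Complex.I * (k:ℂ) * (t:ℂ)) := by
      rw [show -(Complex.I * (k:ℂ) * ((Real.pi - t:ℝ):ℂ)) =
          (k:ℂ) * -((Real.pi:ℂ) * Complex.I) + Complex.I * (k:ℂ) * (t:ℂ) by push_cast; ring,
        Complex.exp_add, Complex.exp_int_mul, Complex.exp_neg, Complex.exp_pi_mul_I,
        show ((-1:ℂ))⁻¹ = -1 by norm_num]
    have hkk : ((-1:ℂ))^k * (-1:ℂ)^k = 1 := by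
      rw [← zpow_add₀ hne]
      exact Even.neg_one_zpow ⟨k, rfl⟩
    rw [map_mul, h1, h2, hk, zpow_add₀ hne]
    calc (-1:ℂ)^m * epsFun m x (Real.pi - t) * Complex.exp (Complex.I * (k:ℂ) * (t:ℂ))
        = ((-1:ℂ)^k * (-1:ℂ)^k) * ((-1:ℂ)^m * epsFun m x (Real.pi - t) *
            Complex.exp (Complex.I * (k:ℂ) * (t:ℂ))) := by rw [hkk, one_mul]
      _ = (-1:ℂ)^m * (-1:ℂ)^k * (epsFun m x (Real.pi - t) *
            ((-1:ℂ)^k * Complex.exp (Complex.I * (k:ℂ) * (t:ℂ)))) := by ring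
  -- conjugation of the Fourier coefficient
  have key : (starRingEnd ℂ) (fCoef m k x) = (-1:ℂ)^(m+k) * fCoef m k x := by
    rw [fCoef, Complex.real_smul, map_mul, Complex.conj_ofReal]
    have hci : (starRingEnd ℂ)
        (∫ t in (-Real.pi)..Real.pi,
          epsFun m x t * Complex.exp (-(Complex.I * (k:ℂ) * (t:ℂ)))) =
        ∫ t in (-Real.pi)..Real.pi,
          (starRingEnd ℂ) (epsFun m x t * Complex.exp (-(Complex.I * (k:ℂ) * (t:ℂ)))) := by
      simp only [intervalIntegral]
      rw [map_sub, ← integral_conj, ← integral_conj]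
    rw [hci]
    have : (∫ t in (-Real.pi)..Real.pi,
        (starRingEnd ℂ) (epsFun m x t * Complex.exp (-(Complex.I * (k:ℂ) * (t:ℂ))))) =
        ∫ t in (-Real.pi)..Real.pi, (-1:ℂ)^(m+k) *
          (epsFun m x (Real.pi - t) *
            Complex.exp (-(Complex.I * (k:ℂ) * ((Real.pi - t : ℝ):ℂ)))) := by
      apply intervalIntegral.integral_congr
      intro t _
      exact hF t
    rw [this, intervalIntegral.integral_const_mul]
    have hcs : (∫ t in (-Real.pi)..Real.pi,
        epsFun m x (Real.pi - t) *
          Complex.exp (-(Complex.I * (k:ℂ) * ((Real.pi - t : ℝ):ℂ)))) =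
        ∫ t in (-Real.pi)..Real.pi,
          epsFun m x t * Complex.exp (-(Complex.I * (k:ℂ) * (t:ℂ))) := by
      rw [intervalIntegral.integral_comp_sub_left
        (fun s => epsFun m x s * Complex.exp (-(Complex.I * (k:ℂ) * (s:ℂ)))) Real.pi]
      rw [show Real.pi - Real.pi = 0 by ring, show Real.pi - -Real.pi = 0 + 2*Real.pi by ring]
      rw [(eps_periodic m k x).intervalIntegral_add_eq 0 (-Real.pi)]
      rw [show -Real.pi + 2*Real.pi = Real.pi by ring]
    rw [hcs]
    ring
  constructor
  · intro hev
    have hev' : Even (m + k) := by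
      rcases Int.even_sub.mp hev with h
      exact Int.even_add.mpr h
    rw [Even.neg_one_zpow hev', one_mul] at key
    exact Complex.conj_eq_iff_im.mp key
  · intro hodd
    have hodd' : Odd (m + k) := by
      rw [← Int.not_even_iff_odd]
      intro h
      exact hodd (Int.even_sub.mpr (Int.even_add.mp h))
    rw [Odd.neg_one_zpow hodd'] at key
    have := congrArg Complex.re key
    simp only [Complex.conj_re, Complex.neg_re, neg_mul, one_mul] at this
    linarith
end

section
/- For every nonzero integer m and every integer k, f_k^m(x) = O(x²) as x → 0⁺; that is, there exist constants M > 0 and δ ∈ (0, 1/4) such that |f_k^m(x)| ≤ M x² for all x ∈ (0, δ). -/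
lemma aux_arg_eq_arctan {z : ℂ} (h : 0 < z.re) : z.arg = Real.arctan (z.im / z.re) := by
  have h2 : |z.arg| < Real.pi / 2 := Complex.abs_arg_lt_pi_div_two_iff.2 (Or.inl h)
  rw [abs_lt] at h2
  rw [← Complex.tan_arg, Real.arctan_tan h2.1 h2.2]

lemma aux_arctan_sub_le {a b : ℝ} (h : a ≤ b) : Real.arctan b - Real.arctan a ≤ b - a := by
  rcases eq_or_lt_of_le h with rfl | h
  · simp
  · obtain ⟨c, _, hc⟩ := exists_hasDerivAt_eq_slope Real.arctan (fun u => 1/(1+u^2)) h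
      (Real.continuous_arctan.continuousOn) (fun u _ => Real.hasDerivAt_arctan u)
    have hba : b - a ≠ 0 := by linarith
    have hcc : (1:ℝ) + c^2 ≠ 0 := by positivity
    have hd : Real.arctan b - Real.arctan a = (b - a) / (1 + c^2) := by
      field_simp at hc ⊢
      linarith [hc]
    rw [hd]
    calc (b - a)/(1+c^2) ≤ (b-a)/1 :=
      div_le_div_of_nonneg_left (by linarith) (by norm_num) (by nlinarith [sq_nonneg c])
    _ = b - a := by ring

lemma aux_arctan_lipschitz (a b : ℝ) : |Real.arctan a - Real.arctan b| ≤ |a - b| := by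
  rcases le_total a b with h | h
  · have h1 := Real.arctan_strictMono.monotone h
    rw [abs_sub_comm, abs_sub_comm a b, _root_.abs_of_nonneg (by linarith : (0:ℝ) ≤ Real.arctan b - Real.arctan a),
      _root_.abs_of_nonneg (by linarith : (0:ℝ) ≤ b - a)]
    exact aux_arctan_sub_le h
  · have h1 := Real.arctan_strictMono.monotone h
    rw [_root_.abs_of_nonneg (by linarith : (0:ℝ) ≤ Real.arctan a - Real.arctan b),
      _root_.abs_of_nonneg (by linarith : (0:ℝ) ≤ a - b)]
    exact aux_arctan_sub_le h

lemma aux_arctan_half {u : ℝ} (h0 : 0 ≤ u) (h1 : u ≤ 1) : u / 2 ≤ Real.arctan u := by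
  rcases eq_or_lt_of_le h0 with rfl | h0
  · simp
  · obtain ⟨c, hcm, hc⟩ := exists_hasDerivAt_eq_slope Real.arctan (fun v => 1/(1+v^2)) h0
      (Real.continuous_arctan.continuousOn) (fun v _ => Real.hasDerivAt_arctan v)
    have hba : u - 0 ≠ 0 := by linarith
    have hcc : (1:ℝ) + c^2 ≠ 0 := by positivity
    have hd : Real.arctan u = u / (1 + c^2) := by
      rw [Real.arctan_zero, sub_zero] at hc
      field_simp at hc ⊢
      linarith [hc]
    rw [hd]
    have hc2 : 1 + c^2 ≤ 2 := by nlinarith [hcm.1, hcm.2]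
    exact div_le_div_of_nonneg_left h0.le (by positivity) hc2

noncomputable section

def RR1 (x t : ℝ) : ℝ := 1 - x^2/2 + (x^2/2)*Real.cos t
def RR2 (x t : ℝ) : ℝ := 1 - x^2/2 - (x^2/2)*Real.cos t
def yy (x t : ℝ) : ℝ := -x + (x^2/2)*Real.sin t

lemma exp_It (t : ℝ) : Complex.exp (Complex.I * (t:ℂ)) =
    (Real.cos t : ℂ) + (Real.sin t : ℂ) * Complex.I := by
  rw [mul_comm, Complex.exp_mul_I, Complex.ofReal_cos, Complex.ofReal_sin]

lemma exp_negIt (t : ℝ) : Complex.exp (-(Complex.I * (t:ℂ))) =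
    (Real.cos t : ℂ) - (Real.sin t : ℂ) * Complex.I := by
  have : -(Complex.I * (t:ℂ)) = Complex.I * ((-t : ℝ) : ℂ) := by push_cast; ring
  rw [this, exp_It]
  push_cast [Real.cos_neg, Real.sin_neg]
  ring

lemma A_eq (x t : ℝ) : 1 - (x : ℂ) ^ 2 / 2 - Complex.I * (x : ℂ) +
    ((x : ℂ) ^ 2 / 2) * Complex.exp (Complex.I * (t : ℂ)) =
    (RR1 x t : ℂ) + (yy x t : ℂ) * Complex.I := by
  rw [exp_It]; unfold RR1 yy; push_cast; ring

lemma B_eq (x t : ℝ) : 1 - (x : ℂ) ^ 2 / 2 + Complex.I * (x : ℂ) +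
    ((x : ℂ) ^ 2 / 2) * Complex.exp (-(Complex.I * (t : ℂ))) =
    (starRingEnd ℂ) ((RR1 x t : ℂ) + (yy x t : ℂ) * Complex.I) := by
  have hconj : (starRingEnd ℂ) ((RR1 x t : ℂ) + (yy x t : ℂ) * Complex.I)
      = (RR1 x t : ℂ) - (yy x t : ℂ) * Complex.I := by
    simp [map_add, map_mul, Complex.conj_ofReal, Complex.conj_I]
    ring
  rw [hconj, exp_negIt]; unfold RR1 yy; push_cast; ring

lemma C_eq (x t : ℝ) : 1 - (x : ℂ) ^ 2 / 2 - Complex.I * (x : ℂ) -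
    ((x : ℂ) ^ 2 / 2) * Complex.exp (-(Complex.I * (t : ℂ))) =
    (RR2 x t : ℂ) + (yy x t : ℂ) * Complex.I := by
  rw [exp_negIt]; unfold RR2 yy; push_cast; ring

lemma D_eq (x t : ℝ) : 1 - (x : ℂ) ^ 2 / 2 + Complex.I * (x : ℂ) -
    ((x : ℂ) ^ 2 / 2) * Complex.exp (Complex.I * (t : ℂ)) =
    (starRingEnd ℂ) ((RR2 x t : ℂ) + (yy x t : ℂ) * Complex.I) := by
  have hconj : (starRingEnd ℂ) ((RR2 x t : ℂ) + (yy x t : ℂ) * Complex.I)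
      = (RR2 x t : ℂ) - (yy x t : ℂ) * Complex.I := by
    simp [map_add, map_mul, Complex.conj_ofReal, Complex.conj_I]
    ring
  rw [hconj, exp_It]; unfold RR2 yy; push_cast; ring

end


/-- helper: I log z - I log (conj z) = -(2 arg z) for Re z > 0 -/
lemma aux_Ilog_sub (z : ℂ) (h : 0 < z.re) :
    Complex.I * Complex.log z - Complex.I * Complex.log ((starRingEnd ℂ) z) =
      ((-(2 * z.arg) : ℝ) : ℂ) := by
  have hπ : z.arg ≠ Real.pi := by
    have h2 : |z.arg| < Real.pi / 2 := Complex.abs_arg_lt_pi_div_two_iff.2 (Or.inl h)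
    have := Real.pi_pos
    intro hc
    rw [hc] at h2
    rw [abs_lt] at h2
    linarith [h2.2]
  rw [Complex.log_conj _ hπ]
  have h3 := Complex.sub_conj (Complex.log z)
  calc Complex.I * Complex.log z - Complex.I * (starRingEnd ℂ) (Complex.log z)
      = Complex.I * (Complex.log z - (starRingEnd ℂ) (Complex.log z)) := by ring
    _ = Complex.I * ((2 * (Complex.log z).im : ℝ) * Complex.I) := by rw [h3]
    _ = ((-(2 * z.arg) : ℝ) : ℂ) := by
        rw [Complex.log_im]
        push_cast
        linear_combination (2 * (z.arg : ℂ)) * Complex.I_sq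

/-- helper: z / conj z = exp(2 i arg z) for z ≠ 0 -/
lemma aux_div_conj (z : ℂ) (h : z ≠ 0) :
    z / (starRingEnd ℂ) z = Complex.exp (((2 * z.arg : ℝ) : ℂ) * Complex.I) := by
  have ha : ((‖z‖ : ℝ) : ℂ) ≠ 0 := by
    simpa using h
  conv_lhs => rw [← Complex.norm_mul_exp_arg_mul_I z]
  rw [map_mul, ← Complex.exp_conj, map_mul, Complex.conj_ofReal, Complex.conj_I,
    mul_div_mul_left _ _ ha, ← Complex.exp_sub, Complex.conj_ofReal]
  congr 1
  push_cast
  ring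

lemma aux_conj_div (z : ℂ) (h : z ≠ 0) :
    (starRingEnd ℂ) z / z = Complex.exp (((-(2 * z.arg) : ℝ) : ℂ) * Complex.I) := by
  have h2 : (starRingEnd ℂ) z / z = (z / (starRingEnd ℂ) z)⁻¹ := by
    rw [inv_div]
  rw [h2, aux_div_conj z h, ← Complex.exp_neg]
  congr 1
  push_cast
  ring

/-- helper: (exp(θ i))^m = exp(m θ i) -/
lemma aux_exp_zpow (θ : ℝ) (m : ℤ) :
    (Complex.exp ((θ : ℂ) * Complex.I)) ^ m =
      Complex.exp ((((m : ℝ) * θ : ℝ) : ℂ) * Complex.I) := by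
  rw [← Complex.exp_int_mul]
  congr 1
  push_cast
  ring

/-- helper: cubic remainder bound -/
lemma aux_exp_cubic (u : ℝ) (h : |u| ≤ 1) :
    ‖(Complex.exp ((u : ℂ) * Complex.I) -
      (1 + (u : ℂ) * Complex.I + ((u : ℂ) * Complex.I) ^ 2 / 2))‖ ≤ (2/9) * |u| ^ 3 := by
  have habs : ‖((u : ℂ) * Complex.I)‖ = |u| := by
    simp [map_mul]
  have hb := Complex.exp_bound (x := (u : ℂ) * Complex.I) (by rw [habs]; exact h)
    (n := 3) (by norm_num)
  have hsum : ∑ i ∈ Finset.range 3, ((u : ℂ) * Complex.I) ^ i / (Nat.factorial i) =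
      1 + (u : ℂ) * Complex.I + ((u : ℂ) * Complex.I) ^ 2 / 2 := by
    simp [Finset.sum_range_succ, Nat.factorial]
  rw [hsum, habs] at hb
  calc ‖_‖ ≤ |u| ^ 3 * ((3 : ℕ).succ * ((Nat.factorial 3 : ℝ) * 3)⁻¹) := hb
    _ = (2/9) * |u| ^ 3 := by norm_num [Nat.factorial]; ring


section AuxEps

set_option maxHeartbeats 2000000 in
lemma eps_bound (m : ℤ) (hm : m ≠ 0) (x t : ℝ) (hx : 0 < x)
    (hxs : x ≤ 1 / (8 * (|(m : ℝ)| + 1))) :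
    ‖epsFun m x t‖ ≤ 45 * (m : ℝ) ^ 2 * x ^ 2 := by
  have hM1 : (1 : ℝ) ≤ |(m : ℝ)| := by
    have h1 : (1 : ℤ) ≤ |m| := Int.one_le_abs (by exact hm)
    calc (1 : ℝ) ≤ ((|m| : ℤ) : ℝ) := by exact_mod_cast h1
      _ = |(m : ℝ)| := by push_cast; ring
  set M := |(m : ℝ)| with hMdef
  have hM0 : 0 < M := by linarith
  have hxs' : x * (8 * (M + 1)) ≤ 1 := by
    rw [le_div_iff₀ (by linarith : (0:ℝ) < 8 * (M + 1))] at hxs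
    exact hxs
  have hMx : M * x ≤ 1 / 8 := by nlinarith
  have hx16 : x ≤ 1 / 16 := by nlinarith
  have hc1 : |Real.cos t| ≤ 1 := Real.abs_cos_le_one t
  have hs1 : |Real.sin t| ≤ 1 := Real.abs_sin_le_one t
  rw [abs_le] at hc1 hs1
  -- bounds on real parts and imaginary part
  have hR1l : (3/4 : ℝ) ≤ RR1 x t := by unfold RR1; nlinarith [hc1.1]
  have hR1u : RR1 x t ≤ 1 := by unfold RR1; nlinarith [hc1.2]
  have hR2l : (3/4 : ℝ) ≤ RR2 x t := by unfold RR2; nlinarith [hc1.2]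
  have hR2u : RR2 x t ≤ 1 := by unfold RR2; nlinarith [hc1.1]
  have hR1p : (0 : ℝ) < RR1 x t := by linarith
  have hR2p : (0 : ℝ) < RR2 x t := by linarith
  have hy1 : (3/4) * x ≤ -(yy x t) := by unfold yy; nlinarith [hs1.2]
  have hy2 : -(yy x t) ≤ (17/16) * x := by unfold yy; nlinarith [hs1.1]
  have hyneg : yy x t < 0 := by nlinarith
  -- the quotients
  set q1 := yy x t / RR1 x t with hq1def
  set q2 := yy x t / RR2 x t with hq2def
  have hq1u : -q1 ≤ 2 * x := by
    rw [hq1def, ← neg_div, div_le_iff₀ hR1p]; nlinarith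
  have hq1l : (3/4) * x ≤ -q1 := by
    rw [hq1def, ← neg_div, le_div_iff₀ hR1p]; nlinarith
  have hq2u : -q2 ≤ 2 * x := by
    rw [hq2def, ← neg_div, div_le_iff₀ hR2p]; nlinarith
  have hq2l : (3/4) * x ≤ -q2 := by
    rw [hq2def, ← neg_div, le_div_iff₀ hR2p]; nlinarith
  -- the angles
  set al := Real.arctan q1 with hal
  set ga := Real.arctan q2 with hga
  have halu : -al ≤ 2 * x := by
    have h0 := aux_arctan_sub_le (show (0:ℝ) ≤ -q1 by linarith)
    rw [Real.arctan_zero] at h0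
    rw [hal, ← Real.arctan_neg]
    linarith
  have hall : (3/8) * x ≤ -al := by
    have h0 := aux_arctan_half (u := -q1) (by linarith) (by nlinarith)
    rw [hal, ← Real.arctan_neg]
    linarith
  have hgau : -ga ≤ 2 * x := by
    have h0 := aux_arctan_sub_le (show (0:ℝ) ≤ -q2 by linarith)
    rw [Real.arctan_zero] at h0
    rw [hga, ← Real.arctan_neg]
    linarith
  have hgal : (3/8) * x ≤ -ga := by
    have h0 := aux_arctan_half (u := -q2) (by linarith) (by nlinarith)
    rw [hga, ← Real.arctan_neg]
    linarith
  -- the gap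
  have hgap : |ga - al| ≤ 4 * x ^ 3 := by
    have hlip := aux_arctan_lipschitz q2 q1
    have hR1ne : RR1 x t ≠ 0 := ne_of_gt hR1p
    have hR2ne : RR2 x t ≠ 0 := ne_of_gt hR2p
    have hdiff : q2 - q1 = yy x t * (RR1 x t - RR2 x t) / (RR1 x t * RR2 x t) := by
      rw [hq1def, hq2def]; field_simp
    have hq21 : |q2 - q1| ≤ 4 * x ^ 3 := by
      rw [hdiff, abs_div, abs_mul]
      have h1 : |yy x t| ≤ (17/16) * x := by rw [abs_of_neg hyneg]; linarith
      have h2 : |RR1 x t - RR2 x t| ≤ x ^ 2 := by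
        have : RR1 x t - RR2 x t = x ^ 2 * Real.cos t := by unfold RR1 RR2; ring
        rw [this, abs_mul, abs_of_nonneg (sq_nonneg x)]
        nlinarith [abs_nonneg (Real.cos t), Real.abs_cos_le_one t, sq_nonneg x]
      have h3 : (9/16 : ℝ) ≤ |RR1 x t * RR2 x t| := by
        rw [abs_of_pos (mul_pos hR1p hR2p)]; nlinarith
      have h4 : |yy x t| * |RR1 x t - RR2 x t| ≤ (17/16) * x * x ^ 2 := by
        have := abs_nonneg (yy x t)
        have := abs_nonneg (RR1 x t - RR2 x t)
        nlinarith
      calc |yy x t| * |RR1 x t - RR2 x t| / |RR1 x t * RR2 x t|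
          ≤ ((17/16) * x * x ^ 2) / (9/16 : ℝ) :=
            div_le_div₀ (by positivity) h4 (by norm_num) h3
        _ ≤ 4 * x ^ 3 := by nlinarith
    calc |ga - al| ≤ |q2 - q1| := hlip
      _ ≤ 4 * x ^ 3 := hq21
  -- complex numbers A and C
  set Az : ℂ := (RR1 x t : ℂ) + (yy x t : ℂ) * Complex.I with hAzdef
  set Cz : ℂ := (RR2 x t : ℂ) + (yy x t : ℂ) * Complex.I with hCzdef
  have hAre : Az.re = RR1 x t := by simp [hAzdef]
  have hAim : Az.im = yy x t := by simp [hAzdef]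
  have hCre : Cz.re = RR2 x t := by simp [hCzdef]
  have hCim : Cz.im = yy x t := by simp [hCzdef]
  have hArep : 0 < Az.re := by rw [hAre]; linarith
  have hCrep : 0 < Cz.re := by rw [hCre]; linarith
  have hAne : Az ≠ 0 := by
    intro hc; rw [hc] at hArep; simp at hArep
  have hCne : Cz ≠ 0 := by
    intro hc; rw [hc] at hCrep; simp at hCrep
  have hAarg : Az.arg = al := by
    rw [aux_arg_eq_arctan hArep, hAim, hAre, hal, hq1def]
  have hCarg : Cz.arg = ga := by
    rw [aux_arg_eq_arctan hCrep, hCim, hCre, hga, hq2def]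
  -- g identity
  have hg : gFun x t = ((-(2 * (al + ga)) : ℝ) : ℂ) := by
    have e1 : gFun x t =
        (Complex.I * Complex.log Az - Complex.I * Complex.log ((starRingEnd ℂ) Az)) +
        (Complex.I * Complex.log Cz - Complex.I * Complex.log ((starRingEnd ℂ) Cz)) := by
      unfold gFun
      rw [A_eq x t, B_eq x t, C_eq x t, D_eq x t, ← hAzdef, ← hCzdef]
      ring
    rw [e1, aux_Ilog_sub Az hArep, aux_Ilog_sub Cz hCrep, hAarg, hCarg]
    push_cast
    ring
  -- l identity
  set u := 2 * (m : ℝ) * ga with hu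
  set v := -(2 * (m : ℝ) * al) with hv
  have hl : lFun m x t = Complex.I *
      (Complex.exp ((u : ℂ) * Complex.I) - Complex.exp ((v : ℂ) * Complex.I)) := by
    unfold lFun
    rw [A_eq x t, B_eq x t, C_eq x t, D_eq x t, ← hAzdef, ← hCzdef]
    rw [aux_div_conj Cz hCne, aux_conj_div Az hAne, hAarg, hCarg]
    rw [aux_exp_zpow, aux_exp_zpow]
    have e1 : (((m : ℝ) * (2 * ga) : ℝ) : ℂ) = ((u : ℝ) : ℂ) := by
      rw [hu]; push_cast; ring
    have e2 : (((m : ℝ) * -(2 * al) : ℝ) : ℂ) = ((v : ℝ) : ℂ) := by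
      rw [hv]; push_cast; ring
    rw [e1, e2]
  -- m * g = v - u
  have hmg : (m : ℂ) * gFun x t = ((v - u : ℝ) : ℂ) := by
    rw [hg, hu, hv]
    push_cast
    ring
  have hvu_lb : (3/2) * (M * x) ≤ |v - u| := by
    have e : v - u = 2 * (m : ℝ) * (-(al + ga)) := by rw [hu, hv]; ring
    have hpos : (0 : ℝ) < -(al + ga) := by nlinarith
    rw [e, abs_mul, abs_mul, abs_of_pos hpos, ← hMdef]
    have : |(2 : ℝ)| = 2 := by norm_num
    rw [this]
    nlinarith
  have hvu_pos : (0 : ℝ) < |v - u| := by nlinarith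
  have hvu_ne : ((v - u : ℝ) : ℂ) ≠ 0 := by
    rw [Complex.ofReal_ne_zero]
    intro hc
    rw [hc] at hvu_pos
    simp at hvu_pos
  -- |eps| as a quotient
  have heps : ‖epsFun m x t‖ =
      ‖lFun m x t - ((v - u : ℝ) : ℂ)‖ / |v - u| := by
    unfold epsFun
    rw [norm_mul, hmg]
    have h0 : (Complex.I * (m : ℂ) * (t : ℂ)).re = 0 := by simp
    have h1 : ‖Complex.exp (Complex.I * (m : ℂ) * (t : ℂ))‖ = 1 := by
      rw [Complex.norm_exp, h0, Real.exp_zero]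
    rw [h1, one_mul, div_sub_one hvu_ne, norm_div, Complex.norm_real, Real.norm_eq_abs]
  -- bounds on u, v
  have hMnn : (0:ℝ) ≤ M := le_of_lt hM0
  have hgaabs : |ga| ≤ 2 * x := by
    rw [abs_of_neg (by linarith only [hgal, hx] : ga < 0)]; linarith only [hgau]
  have halabs : |al| ≤ 2 * x := by
    rw [abs_of_neg (by linarith only [hall, hx] : al < 0)]; linarith only [halu]
  have h2abs : |(2:ℝ)| = 2 := by norm_num
  have huabs : |u| ≤ 4 * (M * x) := by
    rw [hu, abs_mul, abs_mul, ← hMdef, h2abs]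
    calc 2 * M * |ga| ≤ 2 * M * (2 * x) :=
          mul_le_mul_of_nonneg_left hgaabs (by linarith only [hM0])
      _ = 4 * (M * x) := by ring
  have hvabs : |v| ≤ 4 * (M * x) := by
    rw [hv, abs_neg, abs_mul, abs_mul, ← hMdef, h2abs]
    calc 2 * M * |al| ≤ 2 * M * (2 * x) :=
          mul_le_mul_of_nonneg_left halabs (by linarith only [hM0])
      _ = 4 * (M * x) := by ring
  have hu1 : |u| ≤ 1 := by linarith only [huabs, hMx]
  have hv1 : |v| ≤ 1 := by linarith only [hvabs, hMx]
  have huv_sum : |u + v| ≤ 8 * M * x ^ 3 := by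
    have e : u + v = 2 * (m : ℝ) * (ga - al) := by rw [hu, hv]; ring
    rw [e, abs_mul, abs_mul, ← hMdef, h2abs]
    calc 2 * M * |ga - al| ≤ 2 * M * (4 * x ^ 3) :=
          mul_le_mul_of_nonneg_left hgap (by linarith only [hM0])
      _ = 8 * M * x ^ 3 := by ring
  have huv_diff : |u - v| ≤ 8 * (M * x) := by
    calc |u - v| ≤ |u| + |v| := abs_sub u v
      _ ≤ 8 * (M * x) := by linarith only [huabs, hvabs]
  -- cubic remainders
  have hPub := aux_exp_cubic u hu1
  have hPvb := aux_exp_cubic v hv1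
  set Pu := Complex.exp ((u : ℂ) * Complex.I) -
      (1 + (u : ℂ) * Complex.I + ((u : ℂ) * Complex.I) ^ 2 / 2) with hPudef
  set Pv := Complex.exp ((v : ℂ) * Complex.I) -
      (1 + (v : ℂ) * Complex.I + ((v : ℂ) * Complex.I) ^ 2 / 2) with hPvdef
  have hNid : lFun m x t - ((v - u : ℝ) : ℂ) =
      Complex.I * (Pu - Pv) - Complex.I * (((u : ℂ)) ^ 2 - ((v : ℂ)) ^ 2) / 2 := by
    rw [hl, hPudef, hPvdef]
    push_cast
    linear_combination (((u : ℂ) - (v : ℂ)) + (((u : ℂ) ^ 2 - (v : ℂ) ^ 2) / 2) * Complex.I) * Complex.I_sq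
  have hNb : ‖lFun m x t - ((v - u : ℝ) : ℂ)‖ ≤ 31 * (M ^ 3 * x ^ 3) := by
    rw [hNid]
    have habs1 : ‖Complex.I * (Pu - Pv)‖ ≤ (2/9) * |u| ^ 3 + (2/9) * |v| ^ 3 := by
      rw [norm_mul, Complex.norm_I, one_mul]
      calc ‖Pu - Pv‖ ≤ ‖Pu‖ + ‖Pv‖ := by
              exact norm_sub_le _ _
        _ ≤ (2/9) * |u| ^ 3 + (2/9) * |v| ^ 3 := by linarith only [hPub, hPvb]
    have habs2 : ‖Complex.I * (((u : ℂ)) ^ 2 - ((v : ℂ)) ^ 2) / 2‖ =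
        (|u + v| * |u - v|) / 2 := by
      rw [norm_div, norm_mul, Complex.norm_I, one_mul]
      have e : ((u : ℂ)) ^ 2 - ((v : ℂ)) ^ 2 = ((u + v : ℝ) : ℂ) * ((u - v : ℝ) : ℂ) := by
        push_cast; ring
      rw [e, norm_mul, Complex.norm_real, Complex.norm_real]
      simp
    have hstep : ‖Complex.I * (Pu - Pv) -
        Complex.I * (((u : ℂ)) ^ 2 - ((v : ℂ)) ^ 2) / 2‖ ≤
        ((2/9) * |u| ^ 3 + (2/9) * |v| ^ 3) + (|u + v| * |u - v|) / 2 := by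
      calc ‖_‖ ≤ ‖Complex.I * (Pu - Pv)‖ +
            ‖Complex.I * (((u : ℂ)) ^ 2 - ((v : ℂ)) ^ 2) / 2‖ := by
              exact norm_sub_le _ _
        _ ≤ _ := by linarith only [habs1, habs2.le]
    refine hstep.trans ?_
    have hu3 : |u| ^ 3 ≤ 64 * (M ^ 3 * x ^ 3) := by
      calc |u| ^ 3 ≤ (4 * (M * x)) ^ 3 := pow_le_pow_left₀ (abs_nonneg u) huabs 3
        _ = 64 * (M ^ 3 * x ^ 3) := by ring
    have hv3 : |v| ^ 3 ≤ 64 * (M ^ 3 * x ^ 3) := by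
      calc |v| ^ 3 ≤ (4 * (M * x)) ^ 3 := pow_le_pow_left₀ (abs_nonneg v) hvabs 3
        _ = 64 * (M ^ 3 * x ^ 3) := by ring
    have hcross : |u + v| * |u - v| ≤ (8 * M * x ^ 3) * (8 * (M * x)) :=
      mul_le_mul huv_sum huv_diff (abs_nonneg _) (by positivity)
    have hcross2 : (8 * M * x ^ 3) * (8 * (M * x)) = 64 * ((M ^ 2 * x ^ 3) * x) := by ring
    have hxx : (M ^ 2 * x ^ 3) * x ≤ (M ^ 2 * x ^ 3) * (1/16) :=
      mul_le_mul_of_nonneg_left hx16 (by positivity)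
    have hM23 : M ^ 2 * x ^ 3 ≤ M ^ 3 * x ^ 3 :=
      mul_le_mul_of_nonneg_right (pow_le_pow_right₀ (by linarith only [hM1]) (by norm_num))
        (pow_nonneg hx.le 3)
    have hfinnn : (0:ℝ) ≤ M ^ 3 * x ^ 3 := by positivity
    linarith only [hu3, hv3, hcross, hcross2, hxx, hM23, hfinnn]
  -- conclude
  rw [heps]
  have hden : (0 : ℝ) < (3/2) * (M * x) := by positivity
  have hq : ‖lFun m x t - ((v - u : ℝ) : ℂ)‖ / |v - u| ≤
      (31 * (M ^ 3 * x ^ 3)) / ((3/2) * (M * x)) :=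
    div_le_div₀ (by positivity) hNb hden hvu_lb
  refine hq.trans ?_
  rw [div_le_iff₀ hden]
  have hM2 : (m : ℝ) ^ 2 = M ^ 2 := (sq_abs _).symm
  rw [hM2]
  have he : 45 * M ^ 2 * x ^ 2 * ((3/2) * (M * x)) = (135/2) * (M ^ 3 * x ^ 3) := by ring
  rw [he]
  have hfinnn : (0:ℝ) ≤ M ^ 3 * x ^ 3 := by positivity
  linarith only [hfinnn]

end AuxEps

/-- Lemma 26: for every `m ≠ 0` and every `k`, `f_k^m(x) = O(x²)` as `x → 0⁺`. -/
theorem stmt_15 (m k : ℤ) (hm : m ≠ 0) :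
    ∃ M : ℝ, 0 < M ∧ ∃ δ : ℝ, 0 < δ ∧ δ < 1 / 4 ∧
      ∀ x : ℝ, 0 < x → x < δ → ‖fCoef m k x‖ ≤ M * x ^ 2 := by
  have hmr : ((m : ℝ)) ≠ 0 := Int.cast_ne_zero.2 hm
  have hMabs : (0:ℝ) ≤ |(m:ℝ)| := abs_nonneg _
  refine ⟨45 * (m : ℝ) ^ 2, by positivity, 1 / (8 * (|(m : ℝ)| + 1)), by positivity, ?_, ?_⟩
  · rw [div_lt_div_iff₀ (by positivity) (by norm_num)]
    nlinarith
  · intro x hx hxδ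
    have hb : ∀ t : ℝ, ‖epsFun m x t‖ ≤ 45 * (m : ℝ) ^ 2 * x ^ 2 :=
      fun t => eps_bound m hm x t hx (le_of_lt hxδ)
    have hC0 : (0:ℝ) ≤ 45 * (m : ℝ) ^ 2 * x ^ 2 := by positivity
    have hint : ‖∫ t in (-Real.pi)..Real.pi,
        epsFun m x t * Complex.exp (-(Complex.I * (k : ℂ) * (t : ℂ)))‖ ≤
        (45 * (m : ℝ) ^ 2 * x ^ 2) * |Real.pi - (-Real.pi)| := by
      apply intervalIntegral.norm_integral_le_of_norm_le_const
      intro s _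
      rw [norm_mul]
      have h0 : (-(Complex.I * (k : ℂ) * (s : ℂ))).re = 0 := by simp
      have h1 : ‖Complex.exp (-(Complex.I * (k : ℂ) * (s : ℂ)))‖ = 1 := by
        rw [Complex.norm_exp, h0, Real.exp_zero]
      rw [h1, mul_one]
      exact hb s
    have hpi : |Real.pi - (-Real.pi)| = 2 * Real.pi := by
      rw [abs_of_pos (by linarith [Real.pi_pos])]
      ring
    rw [hpi] at hint
    unfold fCoef
    rw [norm_smul, Real.norm_eq_abs,
      abs_of_pos (by positivity : (0:ℝ) < 1 / (2 * Real.pi))]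
    calc 1 / (2 * Real.pi) * ‖∫ t in (-Real.pi)..Real.pi,
          epsFun m x t * Complex.exp (-(Complex.I * (k : ℂ) * (t : ℂ)))‖
        ≤ 1 / (2 * Real.pi) * ((45 * (m : ℝ) ^ 2 * x ^ 2) * (2 * Real.pi)) := by
          apply mul_le_mul_of_nonneg_left hint (by positivity)
      _ = 45 * (m : ℝ) ^ 2 * x ^ 2 := by
          field_simp
end

section
/- For every nonzero integer m and every integer k with |k| > |m|, f_k^m(x) = O(x^{2(|k|−|m|)}) as x → 0⁺; that is, there exist constants M > 0 and δ ∈ (0, 1/4) such that |f_k^m(x)| ≤ M x^{2(|k|−|m|)} for all x ∈ (0, δ). -/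
set_option linter.unusedSectionVars false
set_option maxHeartbeats 1000000

open Complex Set intervalIntegral

/-- compatibility: the complex absolute value as an `AbsoluteValue` (equal to the norm) -/
noncomputable def Complex.abs : AbsoluteValue ℂ ℝ := NormedField.toAbsoluteValue ℂ

lemma Complex.abs_apply' (z : ℂ) : Complex.abs z = ‖z‖ := rfl
lemma Complex.norm_eq_abs (z : ℂ) : ‖z‖ = Complex.abs z := rfl
lemma Complex.abs_ofReal (r : ℝ) : Complex.abs (r : ℂ) = |r| := Complex.norm_real r
lemma Complex.abs_two : Complex.abs (2 : ℂ) = 2 := by simp [Complex.abs_apply']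
lemma Complex.abs_I : Complex.abs Complex.I = 1 := by simp [Complex.abs_apply']
lemma Complex.abs_intCast (n : ℤ) : Complex.abs (n : ℂ) = |(n : ℝ)| := Complex.norm_intCast n
lemma Complex.abs_exp (z : ℂ) : Complex.abs (Complex.exp z) = Real.exp z.re := Complex.norm_exp z
lemma Complex.abs_re_le_abs (z : ℂ) : |z.re| ≤ Complex.abs z := Complex.abs_re_le_norm z
lemma Complex.re_le_abs (z : ℂ) : z.re ≤ Complex.abs z := Complex.re_le_norm z
lemma Complex.abs_exp_sub_one_le {x : ℂ} (hx : Complex.abs x ≤ 1) :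
    Complex.abs (Complex.exp x - 1) ≤ 2 * Complex.abs x := Complex.norm_exp_sub_one_le hx
lemma Complex.abs_le_abs_re_add_abs_im (z : ℂ) : Complex.abs z ≤ |z.re| + |z.im| :=
  Complex.norm_le_abs_re_add_abs_im z


noncomputable def phiM (m : ℤ) : ℂ → ℂ := dslope (fun w => Complex.exp ((m : ℂ) * w)) 0

lemma phiM_diff (m : ℤ) : Differentiable ℂ (phiM m) := by
  rw [← differentiableOn_univ, phiM,
    Complex.differentiableOn_dslope (Filter.univ_mem)]
  exact (Complex.differentiable_exp.comp ((differentiable_id.const_mul _))).differentiableOn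

lemma phiM_zero (m : ℤ) : phiM m 0 = m := by
  rw [phiM, dslope_same]
  have h : HasDerivAt (fun w => Complex.exp ((m : ℂ) * w)) ((m : ℂ)) 0 := by
    simpa [Function.comp_def] using (Complex.hasDerivAt_exp ((m : ℂ) * 0)).comp 0 ((hasDerivAt_id (0:ℂ)).const_mul (m : ℂ))
  exact h.deriv

lemma phiM_of_ne (m : ℤ) (v : ℂ) (hv : v ≠ 0) :
    phiM m v = (Complex.exp ((m : ℂ) * v) - 1) / v := by
  rw [phiM, dslope_of_ne _ hv, slope_def_field]
  simp

lemma phiM_bound (m : ℤ) (hm : m ≠ 0) (v : ℂ) (hv : Complex.abs v ≤ 8) :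
    Complex.abs (phiM m v) ≤ |(m : ℝ)| * (Real.exp (8 * |(m : ℝ)|) + 2) := by
  have hm1 : (1 : ℝ) ≤ |(m : ℝ)| := by
    rw [← Int.cast_abs]; exact_mod_cast Int.one_le_abs hm
  rcases eq_or_ne v 0 with rfl | hv0
  · rw [phiM_zero]
    simp only [Complex.abs_intCast]
    nlinarith [Real.exp_pos (8 * |(m:ℝ)|)]
  · rw [phiM_of_ne m v hv0, map_div₀]
    have hva : 0 < Complex.abs v := Complex.abs.pos hv0
    rcases le_or_gt (Complex.abs ((m : ℂ) * v)) 1 with h1 | h1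
    · have := Complex.abs_exp_sub_one_le (x := (m : ℂ) * v) h1
      rw [map_mul] at this h1
      rw [div_le_iff₀ hva]
      calc Complex.abs (Complex.exp ((m:ℂ)*v) - 1) ≤ 2 * (Complex.abs (m:ℂ) * Complex.abs v) := this
        _ ≤ (|(m:ℝ)| * (Real.exp (8 * |(m:ℝ)|) + 2)) * Complex.abs v := by
            rw [Complex.abs_intCast]
            nlinarith [Real.exp_pos (8 * |(m:ℝ)|),
              mul_nonneg (abs_nonneg ((m:ℝ))) (Complex.abs.nonneg v)]
    · have hmv : Complex.abs (m : ℂ) = |(m : ℝ)| := Complex.abs_intCast m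
      have hv1 : 1 < |(m : ℝ)| * Complex.abs v := by rw [map_mul, hmv] at h1; linarith
      have hre : ((m:ℂ)*v).re ≤ 8 * |(m:ℝ)| := by
        calc ((m:ℂ)*v).re ≤ Complex.abs ((m:ℂ)*v) := Complex.re_le_abs _
          _ = |(m:ℝ)| * Complex.abs v := by rw [map_mul, hmv]
          _ ≤ |(m:ℝ)| * 8 := by gcongr
          _ = 8 * |(m:ℝ)| := by ring
      have hexp : Complex.abs (Complex.exp ((m:ℂ)*v) - 1) ≤ Real.exp (8 * |(m:ℝ)|) + 1 := by
        calc Complex.abs (Complex.exp ((m:ℂ)*v) - 1)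
            ≤ Complex.abs (Complex.exp ((m:ℂ)*v)) + 1 := by
              simpa using Complex.abs.sub_le_add (Complex.exp ((m:ℂ)*v)) 1
          _ ≤ Real.exp (8 * |(m:ℝ)|) + 1 := by
              rw [Complex.abs_exp]
              have := Real.exp_le_exp.mpr hre
              linarith
      rw [div_le_iff₀ hva]
      calc Complex.abs (Complex.exp ((m:ℂ)*v) - 1) ≤ Real.exp (8 * |(m:ℝ)|) + 1 := hexp
        _ = (Real.exp (8 * |(m:ℝ)|) + 1) * 1 := by ring
        _ ≤ (Real.exp (8 * |(m:ℝ)|) + 2) * (|(m:ℝ)| * Complex.abs v) := by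
            nlinarith [Real.exp_pos (8 * |(m:ℝ)|)]
        _ = |(m:ℝ)| * (Real.exp (8 * |(m:ℝ)|) + 2) * Complex.abs v := by ring

noncomputable def Afn (x : ℝ) (z : ℂ) : ℂ := (1 - (x:ℂ)^2/2 - Complex.I * x) + ((x:ℂ)^2/2) * z
noncomputable def Bfn (x : ℝ) (z : ℂ) : ℂ := (1 - (x:ℂ)^2/2 + Complex.I * x) + ((x:ℂ)^2/2) * z⁻¹
noncomputable def Cfn (x : ℝ) (z : ℂ) : ℂ := (1 - (x:ℂ)^2/2 - Complex.I * x) - ((x:ℂ)^2/2) * z⁻¹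
noncomputable def Dfn (x : ℝ) (z : ℂ) : ℂ := (1 - (x:ℂ)^2/2 + Complex.I * x) - ((x:ℂ)^2/2) * z

noncomputable def Lfn (x : ℝ) (z : ℂ) : ℂ :=
  Complex.log (Afn x z) - Complex.log (Bfn x z) + Complex.log (Cfn x z) - Complex.log (Dfn x z)

noncomputable def Phifn (m : ℤ) (x : ℝ) (z : ℂ) : ℂ :=
  (Bfn x z / Afn x z) ^ m * phiM m (Lfn x z) / m - 1

/-- the annulus condition -/
def Ann (x : ℝ) (z : ℂ) : Prop := 4 * x^2 ≤ Complex.abs z ∧ Complex.abs z ≤ (4 * x^2)⁻¹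

set_option linter.unusedSectionVars false

section facts
variable {x : ℝ} {z : ℂ} (hx : 0 < x) (hx' : x < 1/100) (hz : Ann x z)
include hx hx' hz

lemma z_ne : z ≠ 0 := by
  intro h
  have := hz.1
  rw [h, map_zero] at this
  nlinarith

lemma abs_p_le : Complex.abs (((x:ℂ)^2/2) * z) ≤ 1/8 := by
  rw [map_mul, map_div₀]
  simp only [map_pow, Complex.abs_ofReal, Complex.abs_two]
  rw [abs_of_pos hx]
  calc x^2/2 * Complex.abs z ≤ x^2/2 * (4*x^2)⁻¹ := by gcongr; exact hz.2
    _ = 1/8 := by field_simp; ring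

lemma abs_q_le : Complex.abs (((x:ℂ)^2/2) * z⁻¹) ≤ 1/8 := by
  rw [map_mul, map_div₀, map_inv₀]
  simp only [map_pow, Complex.abs_ofReal, Complex.abs_two]
  rw [abs_of_pos hx]
  have h1 : 4 * x^2 ≤ Complex.abs z := hz.1
  have hza : (0:ℝ) < 4 * x^2 := by positivity
  have hinv : (Complex.abs z)⁻¹ ≤ (4*x^2)⁻¹ := by
    apply inv_anti₀ hza h1
  calc x^2/2 * (Complex.abs z)⁻¹ ≤ x^2/2 * (4*x^2)⁻¹ := by gcongr
    _ = 1/8 := by field_simp; ring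

lemma abs_a_sub_one (s : ℝ) (hs : s = 1 ∨ s = -1) :
    Complex.abs ((1 - (x:ℂ)^2/2 + s * Complex.I * x) - 1) ≤ 1/50 := by
  have h1 : (1 - (x:ℂ)^2/2 + s * Complex.I * x) - 1
      = ((-(x^2)/2 : ℝ) : ℂ) + ((s*x : ℝ):ℂ) * Complex.I := by push_cast; ring
  rw [h1]
  calc Complex.abs (((-(x^2)/2 : ℝ) : ℂ) + ((s*x : ℝ):ℂ) * Complex.I)
      ≤ Complex.abs ((-(x^2)/2 : ℝ) : ℂ) + Complex.abs (((s*x : ℝ):ℂ) * Complex.I) :=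
        Complex.abs.add_le _ _
    _ ≤ 1/50 := by
        rw [Complex.abs_ofReal, map_mul, Complex.abs_ofReal, Complex.abs_I, mul_one]
        have e1 : |(-(x^2)/2 : ℝ)| = x^2/2 := by
          rw [abs_of_nonpos (by nlinarith)]; ring
        have e2 : |s*x| = x := by
          rcases hs with rfl | rfl <;> rw [abs_mul] <;> simp [abs_of_pos hx]
        rw [e1, e2]; nlinarith

end facts

/-- points near 1 -/
def near1 (w : ℂ) : Prop := Complex.abs (w - 1) ≤ 3/20

namespace near1
variable {w : ℂ} (h : near1 w)
include h

lemma re_ge : 17/20 ≤ w.re := by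
  have h1 : |(w - 1).re| ≤ 3/20 := le_trans (Complex.abs_re_le_abs _) h
  have : (w - 1).re = w.re - 1 := by simp
  rw [this, abs_le] at h1
  linarith [h1.1]

lemma abs_ge : 17/20 ≤ Complex.abs w := by
  have := h.re_ge
  linarith [Complex.re_le_abs w]

lemma abs_le : Complex.abs w ≤ 23/20 := by
  calc Complex.abs w = Complex.abs ((w - 1) + 1) := by ring_nf
    _ ≤ Complex.abs (w - 1) + Complex.abs 1 := Complex.abs.add_le _ _
    _ ≤ 23/20 := by
        have hh : Complex.abs (w - 1) ≤ 3/20 := h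
        rw [map_one]; linarith

lemma ne_zero : w ≠ 0 := by
  intro h0
  have := h.abs_ge
  rw [h0, map_zero] at this
  norm_num at this

lemma mem_slitPlane : w ∈ Complex.slitPlane := by
  rw [Complex.mem_slitPlane_iff]
  left; linarith [h.re_ge]

lemma abs_log_le : Complex.abs (Complex.log w) ≤ 2 := by
  have hw0 : (0:ℝ) < Complex.abs w := lt_of_lt_of_le (by norm_num) h.abs_ge
  have hre : |Real.log (Complex.abs w)| ≤ 1/5 := by
    rcases le_or_gt 1 (Complex.abs w) with h1 | h1
    · rw [_root_.abs_of_nonneg (Real.log_nonneg h1)]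
      have := Real.log_le_sub_one_of_pos hw0
      linarith [h.abs_le]
    · rw [_root_.abs_of_nonpos (Real.log_nonpos (by positivity) h1.le)]
      rw [← Real.log_inv]
      have hinv : (0:ℝ) < (Complex.abs w)⁻¹ := by positivity
      have := Real.log_le_sub_one_of_pos hinv
      have h17 : (Complex.abs w)⁻¹ ≤ 20/17 := by
        rw [inv_le_comm₀ hw0 (by norm_num)]
        linarith [h.abs_ge]
      linarith
  have harg : |Complex.arg w| ≤ Real.pi / 2 := by
    rw [Complex.abs_arg_le_pi_div_two_iff]
    linarith [h.re_ge]
  calc Complex.abs (Complex.log w) ≤ |(Complex.log w).re| + |(Complex.log w).im| :=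
        Complex.abs_le_abs_re_add_abs_im _
    _ ≤ 1/5 + Real.pi/2 := by
        rw [Complex.log_re, Complex.log_im]
        exact add_le_add hre harg
    _ ≤ 2 := by nlinarith [Real.pi_lt_d2]

end near1

lemma zpow_le_two_pow {a : ℝ} (ha : 1/2 ≤ a) (ha2 : a ≤ 2) (m : ℤ) :
    a ^ m ≤ 2 ^ m.natAbs := by
  have ha0 : (0:ℝ) < a := by linarith
  obtain ⟨n, rfl | rfl⟩ := m.eq_nat_or_neg
  · rw [zpow_natCast]
    simpa using pow_le_pow_left₀ ha0.le ha2 n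
  · rw [zpow_neg, ← inv_zpow, zpow_natCast, Int.natAbs_neg, Int.natAbs_natCast]
    have : a⁻¹ ≤ 2 := by
      rw [inv_le_comm₀ ha0 (by norm_num)]; linarith
    exact pow_le_pow_left₀ (by positivity) this n

section facts2
variable {x : ℝ} {z : ℂ} (hx : 0 < x) (hx' : x < 1/100) (hz : Ann x z)
include hx hx' hz

lemma nearA : near1 (Afn x z) := by
  unfold near1 Afn
  calc Complex.abs ((1 - (x:ℂ)^2/2 - Complex.I * x) + ((x:ℂ)^2/2) * z - 1)
      ≤ Complex.abs ((1 - (x:ℂ)^2/2 - Complex.I * x) - 1) + Complex.abs (((x:ℂ)^2/2) * z) := by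
        have := Complex.abs.add_le ((1 - (x:ℂ)^2/2 - Complex.I * x) - 1) (((x:ℂ)^2/2) * z)
        calc Complex.abs ((1 - (x:ℂ)^2/2 - Complex.I * x) + ((x:ℂ)^2/2) * z - 1)
            = Complex.abs (((1 - (x:ℂ)^2/2 - Complex.I * x) - 1) + ((x:ℂ)^2/2) * z) := by
              ring_nf
          _ ≤ _ := this
    _ ≤ 1/50 + 1/8 := by
        have h1 : Complex.abs ((1 - (x:ℂ)^2/2 - Complex.I * x) - 1) ≤ 1/50 := by
          have := abs_a_sub_one hx hx' hz (-1) (Or.inr rfl)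
          convert this using 3
          push_cast; ring
        exact add_le_add h1 (abs_p_le hx hx' hz)
    _ ≤ 3/20 := by norm_num

lemma nearB : near1 (Bfn x z) := by
  unfold near1 Bfn
  calc Complex.abs ((1 - (x:ℂ)^2/2 + Complex.I * x) + ((x:ℂ)^2/2) * z⁻¹ - 1)
      = Complex.abs (((1 - (x:ℂ)^2/2 + Complex.I * x) - 1) + ((x:ℂ)^2/2) * z⁻¹) := by ring_nf
    _ ≤ Complex.abs ((1 - (x:ℂ)^2/2 + Complex.I * x) - 1) + Complex.abs (((x:ℂ)^2/2) * z⁻¹) :=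
        Complex.abs.add_le _ _
    _ ≤ 1/50 + 1/8 := by
        have h1 : Complex.abs ((1 - (x:ℂ)^2/2 + Complex.I * x) - 1) ≤ 1/50 := by
          have := abs_a_sub_one hx hx' hz 1 (Or.inl rfl)
          convert this using 3
          push_cast; ring
        exact add_le_add h1 (abs_q_le hx hx' hz)
    _ ≤ 3/20 := by norm_num

lemma nearC : near1 (Cfn x z) := by
  unfold near1 Cfn
  calc Complex.abs ((1 - (x:ℂ)^2/2 - Complex.I * x) - ((x:ℂ)^2/2) * z⁻¹ - 1)
      = Complex.abs (((1 - (x:ℂ)^2/2 - Complex.I * x) - 1) + (-(((x:ℂ)^2/2) * z⁻¹))) := by ring_nf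
    _ ≤ Complex.abs ((1 - (x:ℂ)^2/2 - Complex.I * x) - 1) + Complex.abs (-(((x:ℂ)^2/2) * z⁻¹)) :=
        Complex.abs.add_le _ _
    _ ≤ 1/50 + 1/8 := by
        have h1 : Complex.abs ((1 - (x:ℂ)^2/2 - Complex.I * x) - 1) ≤ 1/50 := by
          have := abs_a_sub_one hx hx' hz (-1) (Or.inr rfl)
          convert this using 3
          push_cast; ring
        rw [Complex.abs.map_neg]
        exact add_le_add h1 (abs_q_le hx hx' hz)
    _ ≤ 3/20 := by norm_num

lemma nearD : near1 (Dfn x z) := by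
  unfold near1 Dfn
  calc Complex.abs ((1 - (x:ℂ)^2/2 + Complex.I * x) - ((x:ℂ)^2/2) * z - 1)
      = Complex.abs (((1 - (x:ℂ)^2/2 + Complex.I * x) - 1) + (-(((x:ℂ)^2/2) * z))) := by ring_nf
    _ ≤ Complex.abs ((1 - (x:ℂ)^2/2 + Complex.I * x) - 1) + Complex.abs (-(((x:ℂ)^2/2) * z)) :=
        Complex.abs.add_le _ _
    _ ≤ 1/50 + 1/8 := by
        have h1 : Complex.abs ((1 - (x:ℂ)^2/2 + Complex.I * x) - 1) ≤ 1/50 := by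
          have := abs_a_sub_one hx hx' hz 1 (Or.inl rfl)
          convert this using 3
          push_cast; ring
        rw [Complex.abs.map_neg]
        exact add_le_add h1 (abs_p_le hx hx' hz)
    _ ≤ 3/20 := by norm_num

lemma abs_L_le : Complex.abs (Lfn x z) ≤ 8 := by
  unfold Lfn
  have hA := (nearA hx hx' hz).abs_log_le
  have hB := (nearB hx hx' hz).abs_log_le
  have hC := (nearC hx hx' hz).abs_log_le
  have hD := (nearD hx hx' hz).abs_log_le
  calc Complex.abs (Complex.log (Afn x z) - Complex.log (Bfn x z) + Complex.log (Cfn x z)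
        - Complex.log (Dfn x z))
      ≤ Complex.abs (Complex.log (Afn x z) - Complex.log (Bfn x z) + Complex.log (Cfn x z))
        + Complex.abs (Complex.log (Dfn x z)) := Complex.abs.sub_le_add _ _
    _ ≤ (Complex.abs (Complex.log (Afn x z) - Complex.log (Bfn x z))
        + Complex.abs (Complex.log (Cfn x z))) + Complex.abs (Complex.log (Dfn x z)) := by
        gcongr; exact Complex.abs.add_le _ _
    _ ≤ ((Complex.abs (Complex.log (Afn x z)) + Complex.abs (Complex.log (Bfn x z)))
        + Complex.abs (Complex.log (Cfn x z))) + Complex.abs (Complex.log (Dfn x z)) := by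
        gcongr; exact Complex.abs.sub_le_add _ _
    _ ≤ 8 := by linarith

end facts2

section facts3
variable {m : ℤ} {x : ℝ} {z : ℂ} (hx : 0 < x) (hx' : x < 1/100) (hz : Ann x z)
include hx hx' hz

lemma diffA : DifferentiableAt ℂ (fun w => Afn x w) z := by
  unfold Afn
  exact (differentiableAt_const _).add ((differentiableAt_id.const_mul _))

lemma diffB : DifferentiableAt ℂ (fun w => Bfn x w) z := by
  unfold Bfn
  exact (differentiableAt_const _).add ((differentiableAt_inv (z_ne hx hx' hz)).const_mul _)

lemma diffC : DifferentiableAt ℂ (fun w => Cfn x w) z := by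
  unfold Cfn
  exact (differentiableAt_const _).sub ((differentiableAt_inv (z_ne hx hx' hz)).const_mul _)

lemma diffD : DifferentiableAt ℂ (fun w => Dfn x w) z := by
  unfold Dfn
  exact (differentiableAt_const _).sub ((differentiableAt_id.const_mul _))

lemma diffL : DifferentiableAt ℂ (fun w => Lfn x w) z := by
  unfold Lfn
  exact (((diffA hx hx' hz).clog (nearA hx hx' hz).mem_slitPlane).sub
    ((diffB hx hx' hz).clog (nearB hx hx' hz).mem_slitPlane)).add
    (((diffC hx hx' hz).clog (nearC hx hx' hz).mem_slitPlane)) |>.sub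
    ((diffD hx hx' hz).clog (nearD hx hx' hz).mem_slitPlane)

lemma diffPhi : DifferentiableAt ℂ (fun w => Phifn m x w) z := by
  unfold Phifn
  apply DifferentiableAt.sub _ (differentiableAt_const _)
  apply DifferentiableAt.div_const
  apply DifferentiableAt.mul
  · exact ((diffB hx hx' hz).div (diffA hx hx' hz) (nearA hx hx' hz).ne_zero).zpow
      (Or.inl (div_ne_zero (nearB hx hx' hz).ne_zero (nearA hx hx' hz).ne_zero))
  · exact ((phiM_diff m).differentiableAt).comp z (diffL hx hx' hz)

lemma diffF (j : ℤ) : DifferentiableAt ℂ (fun w => Phifn m x w * w ^ j) z :=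
  (diffPhi hx hx' hz).mul (differentiableAt_id.zpow (Or.inl (z_ne hx hx' hz)))

/-- uniform bound for `Phifn` on the annulus -/
lemma absPhi_le (hm : m ≠ 0) :
    Complex.abs (Phifn m x z) ≤ 2 ^ m.natAbs * (Real.exp (8 * |(m:ℝ)|) + 2) + 1 := by
  have hm1 : (1 : ℝ) ≤ |(m : ℝ)| := by
    rw [← Int.cast_abs]; exact_mod_cast Int.one_le_abs hm
  have hS1 : (1:ℝ)/2 ≤ Complex.abs (Bfn x z / Afn x z) := by
    rw [map_div₀]
    rw [div_le_div_iff₀ (by norm_num) (lt_of_lt_of_le (by norm_num) (nearA hx hx' hz).abs_ge)] at *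
    nlinarith [(nearB hx hx' hz).abs_ge, (nearA hx hx' hz).abs_le]
  have hS2 : Complex.abs (Bfn x z / Afn x z) ≤ 2 := by
    rw [map_div₀, div_le_iff₀ (lt_of_lt_of_le (by norm_num) (nearA hx hx' hz).abs_ge)]
    nlinarith [(nearB hx hx' hz).abs_le, (nearA hx hx' hz).abs_ge]
  have hzp : Complex.abs ((Bfn x z / Afn x z) ^ m) ≤ 2 ^ m.natAbs := by
    rw [map_zpow₀]
    exact zpow_le_two_pow hS1 hS2 m
  have hphi := phiM_bound m hm (Lfn x z) (abs_L_le hx hx' hz)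
  unfold Phifn
  calc Complex.abs ((Bfn x z / Afn x z) ^ m * phiM m (Lfn x z) / m - 1)
      ≤ Complex.abs ((Bfn x z / Afn x z) ^ m * phiM m (Lfn x z) / m) + 1 := by
        have := Complex.abs.sub_le_add ((Bfn x z / Afn x z) ^ m * phiM m (Lfn x z) / (m:ℂ)) 1
        simpa using this
    _ ≤ 2 ^ m.natAbs * (Real.exp (8 * |(m:ℝ)|) + 2) + 1 := by
        rw [map_div₀, map_mul, Complex.abs_intCast]
        gcongr
        rw [div_le_iff₀ (by linarith)]
        calc Complex.abs ((Bfn x z / Afn x z) ^ m) * Complex.abs (phiM m (Lfn x z))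
            ≤ 2 ^ m.natAbs * (|(m:ℝ)| * (Real.exp (8 * |(m:ℝ)|) + 2)) :=
              mul_le_mul hzp hphi (Complex.abs.nonneg _) (by positivity)
          _ = 2 ^ m.natAbs * (Real.exp (8 * |(m:ℝ)|) + 2) * |(m:ℝ)| := by ring

end facts3



section circleid
variable (m k : ℤ) {x : ℝ} (hm : m ≠ 0) (hx : 0 < x) (hx' : x < 1/100) (t : ℝ)

lemma annUnit (hx : 0 < x) (hx' : x < 1/100) : Ann x (Complex.exp (Complex.I * t)) := by
  have habs : Complex.abs (Complex.exp (Complex.I * t)) = 1 := by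
    rw [Complex.abs_exp]
    simp
  constructor <;> rw [habs]
  · nlinarith
  · rw [le_inv_comm₀ (by norm_num) (by nlinarith)]
    nlinarith

include hm hx hx'

lemma eps_eq_phi :
    epsFun m x t * Complex.exp (-(Complex.I * (k:ℂ) * (t:ℂ))) =
      Phifn m x (Complex.exp (Complex.I * t)) *
        Complex.exp (Complex.I * (((m : ℂ) - (k : ℂ))) * (t:ℂ)) := by
  set z : ℂ := Complex.exp (Complex.I * t) with hzdef
  have hz : Ann x z := annUnit t hx hx'
  have hzinv : Complex.exp (-(Complex.I * (t:ℂ))) = z⁻¹ := by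
    rw [Complex.exp_neg]
  have hAne := (nearA hx hx' hz).ne_zero
  have hBne := (nearB hx hx' hz).ne_zero
  have hCne := (nearC hx hx' hz).ne_zero
  have hDne := (nearD hx hx' hz).ne_zero
  -- key factorization
  have hfact : Afn x z * Cfn x z - Bfn x z * Dfn x z
      = (2 - (x:ℂ)^2) * (-(2:ℂ)*Complex.I*x + ((x:ℂ)^2/2)*z - ((x:ℂ)^2/2)*z⁻¹) := by
    unfold Afn Bfn Cfn Dfn; ring
  have habsz : Complex.abs z = 1 := by rw [hzdef, Complex.abs_exp]; simp
  have hfact_ne : Afn x z * Cfn x z - Bfn x z * Dfn x z ≠ 0 := by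
    rw [hfact]
    apply mul_ne_zero
    · intro h
      have : ((2 - x^2 : ℝ) : ℂ) = 0 := by push_cast; push_cast at h; linear_combination h
      rw [Complex.ofReal_eq_zero] at this
      nlinarith
    · intro h
      have h1 : Complex.abs (-(2:ℂ)*Complex.I*x) ≤
          Complex.abs (((x:ℂ)^2/2)*z - ((x:ℂ)^2/2)*z⁻¹) := by
        have : -(2:ℂ)*Complex.I*x = -(((x:ℂ)^2/2)*z - ((x:ℂ)^2/2)*z⁻¹) := by
          linear_combination h
        rw [this, Complex.abs.map_neg]
      have h2 : Complex.abs (-(2:ℂ)*Complex.I*x) = 2*x := by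
        simp only [map_mul, Complex.abs.map_neg, Complex.abs_two, Complex.abs_I,
          Complex.abs_ofReal]
        rw [abs_of_pos hx]; ring
      have h3 : Complex.abs (((x:ℂ)^2/2)*z - ((x:ℂ)^2/2)*z⁻¹) ≤ x^2 := by
        calc Complex.abs (((x:ℂ)^2/2)*z - ((x:ℂ)^2/2)*z⁻¹)
            ≤ Complex.abs (((x:ℂ)^2/2)*z) + Complex.abs (((x:ℂ)^2/2)*z⁻¹) :=
              Complex.abs.sub_le_add _ _
          _ ≤ x^2 := by
              simp only [map_mul, map_div₀, map_pow, Complex.abs_ofReal, Complex.abs_two,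
                map_inv₀, habsz]
              rw [abs_of_pos hx]; norm_num
      rw [h2] at h1
      nlinarith [h1.trans h3]
  have hexpL : Complex.exp (Lfn x z) = (Afn x z * Cfn x z) / (Bfn x z * Dfn x z) := by
    unfold Lfn
    rw [Complex.exp_sub, Complex.exp_add, Complex.exp_sub, Complex.exp_log hAne,
      Complex.exp_log hBne, Complex.exp_log hCne, Complex.exp_log hDne]
    field_simp
  have hLne : Lfn x z ≠ 0 := by
    intro h0
    rw [h0, Complex.exp_zero] at hexpL
    have hBD : Bfn x z * Dfn x z ≠ 0 := mul_ne_zero hBne hDne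
    have hAC : Afn x z * Cfn x z = Bfn x z * Dfn x z :=
      (div_eq_one_iff_eq hBD).mp hexpL.symm
    exact hfact_ne (by rw [hAC]; ring)
  -- identification of gFun and lFun
  have hg : gFun x t = Complex.I * Lfn x z := by
    unfold gFun Lfn Afn Bfn Cfn Dfn
    rw [hzinv, ← hzdef]
    ring
  have hl : lFun m x t = Complex.I * ((Cfn x z / Dfn x z)^m - (Bfn x z / Afn x z)^m) := by
    unfold lFun
    rw [hzinv, ← hzdef]
    have e1 : (1 - (x:ℂ)^2/2 - Complex.I*x - ((x:ℂ)^2/2) * z⁻¹) = Cfn x z := by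
      unfold Cfn; ring
    have e2 : (1 - (x:ℂ)^2/2 + Complex.I*x - ((x:ℂ)^2/2) * z) = Dfn x z := by
      unfold Dfn; ring
    have e3 : (1 - (x:ℂ)^2/2 + Complex.I*x + ((x:ℂ)^2/2) * z⁻¹) = Bfn x z := by
      unfold Bfn; ring
    have e4 : (1 - (x:ℂ)^2/2 - Complex.I*x + ((x:ℂ)^2/2) * z) = Afn x z := by
      unfold Afn; ring
    rw [e1, e2, e3, e4]
  -- the ratio identity
  have hmC : ((m:ℂ)) ≠ 0 := Int.cast_ne_zero.mpr hm
  have hratio : lFun m x t / ((m:ℂ) * gFun x t)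
      = (Bfn x z / Afn x z)^m * phiM m (Lfn x z) / m := by
    rw [hl, hg, phiM_of_ne m _ hLne]
    have hcd : Cfn x z / Dfn x z = (Afn x z * Cfn x z) / (Bfn x z * Dfn x z) *
        (Bfn x z / Afn x z) := by
      field_simp
    have hzm : (Cfn x z / Dfn x z)^m
        = Complex.exp ((m:ℂ) * Lfn x z) * (Bfn x z / Afn x z)^m := by
      rw [hcd, mul_zpow, ← hexpL, ← Complex.exp_int_mul]
    rw [hzm]
    field_simp [Complex.I_ne_zero, hmC, hLne]
  -- final assembly
  unfold epsFun Phifn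
  rw [hratio]
  have hee : Complex.exp (Complex.I*(m:ℂ)*(t:ℂ)) * Complex.exp (-(Complex.I*(k:ℂ)*(t:ℂ)))
      = Complex.exp (Complex.I*((m:ℂ)-(k:ℂ))*(t:ℂ)) := by
    rw [← Complex.exp_add]
    congr 1
    ring
  rw [mul_right_comm, hee, mul_comm]

end circleid



section ints
variable (m k : ℤ) (x : ℝ)

/-- the integrand on circles -/
noncomputable def Ffn (m k : ℤ) (x : ℝ) (z : ℂ) : ℂ := Phifn m x z * z ^ (m - k - 1)

/-- the unit-circle pull-back -/
noncomputable def Gfn (m k : ℤ) (x : ℝ) (t : ℝ) : ℂ :=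
  Phifn m x (Complex.exp (Complex.I * t)) * Complex.exp (Complex.I * ((m:ℂ) - (k:ℂ)) * t)

lemma Gfn_periodic : Function.Periodic (Gfn m k x) (2 * Real.pi) := by
  intro t
  unfold Gfn
  have h1 : Complex.exp (Complex.I * ((t : ℝ) + 2*Real.pi : ℝ)) = Complex.exp (Complex.I * t) := by
    push_cast
    rw [mul_add, Complex.exp_add]
    have e : Complex.I * (2*(Real.pi:ℂ)) = 2*(Real.pi:ℂ)*Complex.I := by ring
    rw [e, Complex.exp_two_pi_mul_I, mul_one]
  have h2 : Complex.exp (Complex.I * ((m:ℂ) - (k:ℂ)) * ((t : ℝ) + 2*Real.pi : ℝ))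
      = Complex.exp (Complex.I * ((m:ℂ) - (k:ℂ)) * t) := by
    push_cast
    rw [mul_add, Complex.exp_add]
    have : Complex.I * ((m:ℂ) - (k:ℂ)) * (2*(Real.pi:ℂ)) = ((m - k : ℤ) : ℂ) * (2*Real.pi*Complex.I) := by
      push_cast; ring
    rw [this, Complex.exp_int_mul_two_pi_mul_I, mul_one]
  rw [h1, h2]

lemma int_shift : ∫ t in (-Real.pi)..Real.pi, Gfn m k x t = ∫ t in (0:ℝ)..(2*Real.pi), Gfn m k x t := by
  have := (Gfn_periodic m k x).intervalIntegral_add_eq (-Real.pi) 0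
  have e : -Real.pi + 2*Real.pi = Real.pi := by ring
  rw [e] at this
  rw [this, zero_add]

lemma circle_one : (∮ z in C((0:ℂ), 1), Ffn m k x z)
    = Complex.I * ∫ t in (0:ℝ)..(2*Real.pi), Gfn m k x t := by
  rw [circleIntegral]
  rw [← intervalIntegral.integral_const_mul]
  apply intervalIntegral.integral_congr
  intro θ _
  simp only [deriv_circleMap, circleMap, Complex.ofReal_one, zero_add, one_mul, smul_eq_mul]
  unfold Ffn Gfn
  have hmc : Complex.exp (θ * Complex.I) = Complex.exp (Complex.I * θ) := by rw [mul_comm]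
  rw [hmc]
  have hne : Complex.exp (Complex.I * θ) ≠ 0 := Complex.exp_ne_zero _
  have hzp : Complex.exp (Complex.I * θ) ^ (m - k - 1) * Complex.exp (Complex.I * θ)
      = Complex.exp (Complex.I * ((m:ℂ) - (k:ℂ)) * θ) := by
    rw [← zpow_add_one₀ hne]
    have e : m - k - 1 + 1 = m - k := by ring
    rw [e, ← Complex.exp_int_mul]
    congr 1
    push_cast
    ring
  calc Complex.exp (Complex.I * θ) * Complex.I *
        (Phifn m x (Complex.exp (Complex.I * θ)) * Complex.exp (Complex.I * θ) ^ (m - k - 1))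
      = Complex.I * (Phifn m x (Complex.exp (Complex.I * θ)) *
        (Complex.exp (Complex.I * θ) ^ (m - k - 1) * Complex.exp (Complex.I * θ))) := by ring
    _ = _ := by rw [hzp]

end ints

section shift
variable {m k : ℤ} {x : ℝ} (hx : 0 < x) (hx' : x < 1/100)
include hx hx'

lemma ann_of_mem {w : ℂ} {r R : ℝ} (hr : 4*x^2 ≤ r) (hR : R ≤ (4*x^2)⁻¹)
    (h1 : r ≤ Complex.abs w) (h2 : Complex.abs w ≤ R) : Ann x w :=
  ⟨le_trans hr h1, le_trans h2 hR⟩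

lemma contour_shift {r R : ℝ} (hr : 4*x^2 ≤ r) (hrR : r ≤ R) (hR : R ≤ (4*x^2)⁻¹) :
    (∮ z in C((0:ℂ), R), Ffn m k x z) = ∮ z in C((0:ℂ), r), Ffn m k x z := by
  apply circleIntegral_eq_of_differentiable_on_annulus_off_countable (s := ∅)
    (lt_of_lt_of_le (by positivity) hr) hrR Set.countable_empty
  · intro w hw
    rw [Set.mem_diff, Metric.mem_closedBall, Metric.mem_ball, Complex.dist_eq, sub_zero,
      not_lt] at hw
    have hann : Ann x w := ann_of_mem hx hx' hr hR hw.2 hw.1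
    exact ((diffF hx hx' hann (m - k - 1)).continuousAt).continuousWithinAt
  · intro w hw
    rw [Set.mem_diff, Set.mem_diff, Metric.mem_ball, Metric.mem_closedBall, Complex.dist_eq,
      sub_zero, not_le] at hw
    have hann : Ann x w := ann_of_mem hx hx' hr hR hw.1.2.le hw.1.1.le
    exact diffF hx hx' hann (m - k - 1)

lemma circle_bound (hm : m ≠ 0) {ρ : ℝ} (hρ1 : 4*x^2 ≤ ρ) (hρ2 : ρ ≤ (4*x^2)⁻¹) :
    Complex.abs (∮ z in C((0:ℂ), ρ), Ffn m k x z)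
      ≤ 2*Real.pi * (2 ^ m.natAbs * (Real.exp (8*|(m:ℝ)|) + 2) + 1) * ρ ^ (m - k) := by
  have hρ0 : (0:ℝ) < ρ := lt_of_lt_of_le (by positivity) hρ1
  set CPhi : ℝ := 2 ^ m.natAbs * (Real.exp (8*|(m:ℝ)|) + 2) + 1 with hC
  have hbd := circleIntegral.norm_integral_le_of_norm_le_const (f := Ffn m k x) (c := (0:ℂ))
    (R := ρ) (C := CPhi * ρ ^ (m - k - 1)) hρ0.le ?_
  · rw [Complex.norm_eq_abs] at hbd
    calc Complex.abs (∮ z in C((0:ℂ), ρ), Ffn m k x z)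
        ≤ 2*Real.pi*ρ*(CPhi * ρ ^ (m-k-1)) := hbd
      _ = 2*Real.pi*CPhi*(ρ ^ (m-k-1) * ρ) := by ring
      _ = 2*Real.pi*CPhi*ρ^(m-k) := by
          rw [← zpow_add_one₀ hρ0.ne']
          congr 2
          ring
  · intro w hw
    rw [mem_sphere_iff_norm, sub_zero, Complex.norm_eq_abs] at hw
    have hann : Ann x w := ann_of_mem hx hx' hρ1 hρ2 hw.ge hw.le
    rw [Complex.norm_eq_abs]
    unfold Ffn
    rw [map_mul, map_zpow₀, hw]
    exact mul_le_mul_of_nonneg_right (absPhi_le hx hx' hann hm) (zpow_nonneg hρ0.le _)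

end shift


/-- Lemma 27: for every `m ≠ 0` and every `k` with `|k| > |m|`,
`f_k^m(x) = O(x^{2(|k|−|m|)})` as `x → 0⁺`. -/
theorem stmt_16 (m k : ℤ) (hm : m ≠ 0) (hkm : |m| < |k|) :
    ∃ M : ℝ, 0 < M ∧ ∃ δ : ℝ, 0 < δ ∧ δ < 1 / 4 ∧
      ∀ x : ℝ, 0 < x → x < δ →
        ‖fCoef m k x‖ ≤ M * x ^ (2 * (|k| - |m|)) := by

  set CPhi : ℝ := 2 ^ m.natAbs * (Real.exp (8*|(m:ℝ)|) + 2) + 1 with hC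
  have hCpos : 0 < CPhi := by positivity
  set N : ℕ := (m - k).natAbs with hN
  refine ⟨CPhi * 4 ^ N, by positivity, 1/100, by norm_num, by norm_num, ?_⟩
  intro x hx0 hx'
  have hmk0 : m - k ≠ 0 := by
    intro h
    rw [sub_eq_zero] at h
    subst h
    exact absurd hkm (lt_irrefl _)
  have h4x : (0:ℝ) < 4 * x^2 := by positivity
  have h4x1 : 4 * x^2 ≤ 1 := by nlinarith
  have h4xinv : (1:ℝ) ≤ (4 * x^2)⁻¹ := by
    rw [le_inv_comm₀ (by norm_num) h4x]
    simpa using h4x1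
  have key : ∃ ρ : ℝ, 4*x^2 ≤ ρ ∧ ρ ≤ (4*x^2)⁻¹ ∧
      ((∮ z in C((0:ℂ), 1), Ffn m k x z) = ∮ z in C((0:ℂ), ρ), Ffn m k x z) ∧
      ρ ^ (m - k) = (4*x^2) ^ N := by
    rcases lt_or_gt_of_ne hmk0 with hneg | hpos
    · refine ⟨(4*x^2)⁻¹, le_trans h4x1 h4xinv, le_refl _, ?_, ?_⟩
      · exact (contour_shift (m := m) (k := k) hx0 hx' h4x1 h4xinv (le_refl _)).symm
      · rw [inv_zpow, ← zpow_neg]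
        have e : -(m - k) = (N : ℤ) := by rw [hN]; omega
        rw [e, zpow_natCast]
    · refine ⟨4*x^2, le_refl _, le_trans h4x1 h4xinv, ?_, ?_⟩
      · exact contour_shift (m := m) (k := k) hx0 hx' (le_refl _) h4x1 h4xinv
      · have e : m - k = (N : ℤ) := by rw [hN]; omega
        rw [e, zpow_natCast]
  obtain ⟨ρ, hρ1, hρ2, hshift, hρpow⟩ := key
  have hb := circle_bound (m := m) (k := k) hx0 hx' hm hρ1 hρ2
  have h1 : (∫ t in (-Real.pi)..Real.pi,
      epsFun m x t * Complex.exp (-(Complex.I*(k:ℂ)*(t:ℂ))))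
      = ∫ t in (0:ℝ)..2*Real.pi, Gfn m k x t := by
    rw [← int_shift]
    apply intervalIntegral.integral_congr
    intro t _
    exact eps_eq_phi m k hm hx0 hx' t
  have h2 : Complex.abs (∮ z in C((0:ℂ),1), Ffn m k x z)
      = Complex.abs (∫ t in (0:ℝ)..2*Real.pi, Gfn m k x t) := by
    rw [circle_one, map_mul, Complex.abs_I, one_mul]
  have heq : Complex.abs (fCoef m k x) = (2*Real.pi)⁻¹ *
      Complex.abs (∮ z in C((0:ℂ), ρ), Ffn m k x z) := by
    unfold fCoef
    rw [← hshift, h2, h1]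
    rw [← Complex.norm_eq_abs, ← Complex.norm_eq_abs, norm_smul, Real.norm_eq_abs,
      abs_of_pos (by positivity), one_div]
  have hn0 : (0:ℤ) ≤ |k| - |m| := by
    have := hkm.le
    omega
  set n0 : ℕ := (|k| - |m|).toNat with hn0def
  have he : x ^ (2 * (|k| - |m|)) = x ^ (2 * n0 : ℕ) := by
    rw [← zpow_natCast]
    congr 1
    push_cast [hn0def, Int.toNat_of_nonneg hn0]
    ring
  have hn0N : 2 * n0 ≤ 2 * N := by
    have h3 : |k| - |m| ≤ |m - k| := by
      have h4 := abs_sub_abs_le_abs_sub k m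
      rw [abs_sub_comm] at h4
      linarith
    have h5 : n0 ≤ N := by
      apply Int.toNat_le.mpr
      calc |k| - |m| ≤ |m - k| := h3
        _ = ((m-k).natAbs : ℤ) := Int.abs_eq_natAbs _
    omega
  have hx1 : x ≤ 1 := by linarith
  rw [Complex.norm_eq_abs]
  calc Complex.abs (fCoef m k x)
      = (2*Real.pi)⁻¹ * Complex.abs (∮ z in C((0:ℂ), ρ), Ffn m k x z) := heq
    _ ≤ (2*Real.pi)⁻¹ * (2*Real.pi * CPhi * ρ ^ (m - k)) := by
        gcongr
    _ = CPhi * (4*x^2) ^ N := by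
        rw [hρpow]
        field_simp
    _ = CPhi * 4 ^ N * (x ^ 2) ^ N := by rw [mul_pow]; ring
    _ = CPhi * 4 ^ N * x ^ (2*N) := by rw [pow_mul]
    _ ≤ CPhi * 4 ^ N * x ^ (2*n0) :=
        mul_le_mul_of_nonneg_left (pow_le_pow_of_le_one hx0.le hx1 hn0N) (by positivity)
    _ = CPhi * 4 ^ N * x ^ (2 * (|k| - |m|)) := by rw [he]
end
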